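/- arXiv:1407.1181 — 2 statements merged into one kernel-verified Lean document; each statement's English description precedes it below -/
import Mathlib

section
/- Suppose f : D → ℝ is observed at x₁,…,xₙ with values yᵢ = f(xᵢ), and f ∈ ALB(m,σ), i.e., there exists an m-Lipschitz g with ‖f − g‖_∞ ≤ σ. Define H^lower(x) = max_i (yᵢ − m‖x − xᵢ‖) − σ' and H^upper(x) = min_i (yᵢ + m‖x − xᵢ‖) + σ', where σ' = σ for x not among the observed points and σ' = 0 otherwise (with signs so that H^lower is a lower bound and H^upper an upper bound). Then H^lower(x) ≤ f(x) ≤ H^upper(x) for all x ∈ D. -/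
open scoped Classical

theorem abs_sub_le_of_lipschitz_approx {E : Type*} [SeminormedAddCommGroup E] {D : Set E}
    {f g : E → ℝ} {m ε : ℝ} (hg : ∀ x ∈ D, ∀ y ∈ D, |g x - g y| ≤ m * ‖x - y‖)
    {x y : E} (hx : x ∈ D) (hy : y ∈ D) (hfx : |f x - g x| ≤ ε) (hfy : f y = g y) :
    |f x - f y| ≤ m * ‖x - y‖ + ε :=
  calc |f x - f y| = |(g x - g y) + (f x - g x)| := by rw [hfy]; ring_nf
    _ ≤ |g x - g y| + |f x - g x| := abs_add_le _ _
    _ ≤ m * ‖x - y‖ + ε := add_le_add (hg x hx y hy) hfx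

theorem stmt_9_general (d n : ℕ) (D : Set (EuclideanSpace ℝ (Fin d)))
    (f g : EuclideanSpace ℝ (Fin d) → ℝ) (m σ : ℝ)
    (hg : ∀ x ∈ D, ∀ y ∈ D, |g x - g y| ≤ m * ‖x - y‖)
    (hfg : ∀ x ∈ D, |f x - g x| ≤ σ)
    (xs : Fin (n + 1) → EuclideanSpace ℝ (Fin d)) (hxs : ∀ i, xs i ∈ D)
    (hobs : ∀ i, f (xs i) = g (xs i)) :
    ∀ x ∈ D,
      (Finset.univ.sup' Finset.univ_nonempty (fun i => f (xs i) - m * ‖x - xs i‖))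
          - (if x ∈ Set.range xs then 0 else σ) ≤ f x ∧
      f x ≤ (Finset.univ.inf' Finset.univ_nonempty (fun i => f (xs i) + m * ‖x - xs i‖))
          + (if x ∈ Set.range xs then 0 else σ) := by
  intro x hx
  have hfx : |f x - g x| ≤ if x ∈ Set.range xs then 0 else σ := by
    split_ifs with hr
    · obtain ⟨j, rfl⟩ := hr
      simp [hobs j]
    · exact hfg x hx
  have hclose i := abs_le.mp
    (abs_sub_le_of_lipschitz_approx hg hx (hxs i) hfx (hobs i))
  constructor
  · refine sub_le_iff_le_add.mpr (Finset.sup'_le _ _ fun i _ => ?_)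
    linarith [(hclose i).1]
  · refine sub_le_iff_le_add.mp (Finset.le_inf' _ _ fun i _ => ?_)
    linarith [(hclose i).2]

/-- Envelope bounds for a function in `ALB(m, σ)` observed (exactly, i.e. agreeing with the
Lipschitz approximant) at points `xs 0, …, xs n`. -/
theorem stmt_9 (d n : ℕ) (D : Set (EuclideanSpace ℝ (Fin d)))
    (f g : EuclideanSpace ℝ (Fin d) → ℝ) (m σ : ℝ) (hm : 0 ≤ m) (hσ : 0 ≤ σ)
    (hg : ∀ x ∈ D, ∀ y ∈ D, |g x - g y| ≤ m * ‖x - y‖)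
    (hfg : ∀ x ∈ D, |f x - g x| ≤ σ)
    (xs : Fin (n + 1) → EuclideanSpace ℝ (Fin d)) (hxs : ∀ i, xs i ∈ D)
    (hobs : ∀ i, f (xs i) = g (xs i)) :
    ∀ x ∈ D,
      (Finset.univ.sup' Finset.univ_nonempty (fun i => f (xs i) - m * ‖x - xs i‖))
          - (if x ∈ Set.range xs then 0 else σ) ≤ f x ∧
      f x ≤ (Finset.univ.inf' Finset.univ_nonempty (fun i => f (xs i) + m * ‖x - xs i‖))
          + (if x ∈ Set.range xs then 0 else σ) :=
  stmt_9_general d n D f g m σ hg hfg xs hxs hobs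
end

section
/- For f(x) = Mx on [a,b], the inverse LB-BD function satisfies γ_f^{-1}(σ) = max{0, M − 2σ/(b−a)}, i.e., the smallest Lipschitz constant achievable within sup-norm distance σ of a linear function of slope M > 0 is M − 2σ/(b−a) (or 0 if σ ≥ M(b−a)/2). -/
/-!
An `m`-Lipschitz `g` within `σ` of `f` gives `f b - f a ≤ m (b - a) + 2σ` by comparing the two
endpoints, so `M - 2σ/(b - a)` is a lower bound. It is attained by the line of slope
`c = max 0 (M - 2σ/(b - a))` through the value of `f` at the midpoint: its distance
`(M - c) |x - (a + b)/2|` from `f` is at most `(M - c)(b - a)/2 ≤ σ`.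
-/

/-- Inverse LB-BD function: smallest Lipschitz constant achievable within sup-norm
distance `σ` of `f`. -/
noncomputable def gammaInv (a b : ℝ) (f : ℝ → ℝ) (σ : ℝ) : ℝ :=
  sInf {m : ℝ | 0 ≤ m ∧ ∃ g : ℝ → ℝ,
    (∀ x ∈ Set.Icc a b, ∀ y ∈ Set.Icc a b, |g x - g y| ≤ m * |x - y|) ∧
    ∀ x ∈ Set.Icc a b, |f x - g x| ≤ σ}

open Set

def LipApprox (a b : ℝ) (f : ℝ → ℝ) (σ m : ℝ) : Prop :=
  0 ≤ m ∧ ∃ g : ℝ → ℝ,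
    (∀ x ∈ Icc a b, ∀ y ∈ Icc a b, |g x - g y| ≤ m * |x - y|) ∧
    ∀ x ∈ Icc a b, |f x - g x| ≤ σ

theorem gammaInv_eq_sInf (a b : ℝ) (f : ℝ → ℝ) (σ : ℝ) :
    gammaInv a b f σ = sInf {m | LipApprox a b f σ m} :=
  rfl

theorem LipApprox.sub_le {a b m σ : ℝ} {f : ℝ → ℝ} (h : LipApprox a b f σ m) (hab : a ≤ b) :
    f b - f a ≤ m * (b - a) + 2 * σ := by
  obtain ⟨-, g, hg, hfg⟩ := h
  have ha : a ∈ Icc a b := left_mem_Icc.mpr hab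
  have hb : b ∈ Icc a b := right_mem_Icc.mpr hab
  have hgab := hg b hb a ha
  rw [abs_of_nonneg (sub_nonneg.mpr hab)] at hgab
  linarith [(abs_le.mp hgab).2, (abs_le.mp (hfg a ha)).1, (abs_le.mp (hfg b hb)).2]

theorem abs_sub_midpoint_le {a b x : ℝ} (hx : x ∈ Icc a b) : |x - (a + b) / 2| ≤ (b - a) / 2 :=
  abs_le.mpr ⟨by linarith [hx.1], by linarith [hx.2]⟩

theorem lipApprox_const_mul {a b M σ c : ℝ} (hc : 0 ≤ c) (hcM : |M - c| * (b - a) ≤ 2 * σ) :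
    LipApprox a b (M * ·) σ c := by
  refine ⟨hc, fun x => c * x + (M - c) * ((a + b) / 2), fun x _ y _ => ?_, fun x hx => ?_⟩
  · rw [show c * x + (M - c) * ((a + b) / 2) - (c * y + (M - c) * ((a + b) / 2)) = c * (x - y) by
      ring, abs_mul, abs_of_nonneg hc]
  · calc |M * x - (c * x + (M - c) * ((a + b) / 2))| = |M - c| * |x - (a + b) / 2| := by
          rw [← abs_mul]; ring_nf
      _ ≤ |M - c| * ((b - a) / 2) := by gcongr; exact abs_sub_midpoint_le hx
      _ ≤ σ := by linarith

/-- For `f(x) = Mx` on `[a,b]`: `γ_f⁻¹(σ) = max {0, M - 2σ/(b-a)}`. -/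
theorem stmt_15 (a b M σ : ℝ) (hab : a < b) (hM : 0 < M) (hσ : 0 ≤ σ) :
    gammaInv a b (fun x => M * x) σ = max 0 (M - 2 * σ / (b - a)) := by
  have hba : 0 < b - a := sub_pos.mpr hab
  have hσ' : 0 ≤ 2 * σ / (b - a) := by positivity
  rw [gammaInv_eq_sInf]
  refine IsLeast.csInf_eq ⟨lipApprox_const_mul (le_max_left _ _) ?_, fun m hm => ?_⟩
  · rw [abs_of_nonneg (sub_nonneg.mpr (max_le hM.le (by linarith))), ← le_div_iff₀ hba]
    linarith [le_max_right 0 (M - 2 * σ / (b - a))]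
  · refine max_le hm.1 (sub_le_comm.mp ((le_div_iff₀ hba).mpr ?_))
    linarith [hm.sub_le hab.le]
end
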